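/- arXiv:1305.5100 — 6 statements merged into one kernel-verified Lean document; each statement's English description precedes it below -/
import Mathlib

section
/- For ξ, η ∈ C_c(X) the map (g,x) ↦ Δ(g)^{-1/2} · conj(ξ(x)) · η(g⁻¹x) defines an element of C_c(G, C_0(X)); i.e., it is continuous and has compact support in G (uniformly in x) whenever the action of G on X is proper. -/
/-!
Outside the preimage of `tsupport η ×ˢ tsupport ξ` under `(g, x) ↦ (g⁻¹ • x, x)` the function
vanishes, and properness of the action makes this preimage compact. Continuity is immediate once
one notes that `Δ g` is a unit, hence nonzero, so `t ↦ t ^ (-1/2)` is continuous along `Δ`.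
-/

theorem ProperSMul.isProperMap_inv_smul_pair {G X : Type*} [Group G] [TopologicalSpace G]
    [ContinuousInv G] [TopologicalSpace X] [MulAction G X] [ProperSMul G X] :
    IsProperMap (fun p : G × X => (p.1⁻¹ • p.2, p.2)) :=
  isProperMap_smul_pair.comp ((Homeomorph.inv G).prodCongr (Homeomorph.refl X)).isProperMap

theorem ProperSMul.hasCompactSupport_mul_mul_inv_smul {G X M₀ : Type*} [Group G]
    [TopologicalSpace G] [ContinuousInv G] [TopologicalSpace X] [MulAction G X] [ProperSMul G X]
    [MulZeroClass M₀] (u : G × X → M₀) {f g : X → M₀} (hf : HasCompactSupport f)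
    (hg : HasCompactSupport g) :
    HasCompactSupport (fun p : G × X => u p * f p.2 * g (p.1⁻¹ • p.2)) := by
  have hπ := isProperMap_inv_smul_pair (G := G) (X := X)
  refine .intro' (hπ.isCompact_preimage (hg.prod hf))
    (((isClosed_tsupport g).prod (isClosed_tsupport f)).preimage hπ.continuous) fun p hp => ?_
  rcases not_and_or.mp hp with hp | hp
  · rw [image_eq_zero_of_notMem_tsupport hp, mul_zero]
  · rw [image_eq_zero_of_notMem_tsupport hp, mul_zero, zero_mul]

theorem statement2_general {G X : Type*} [Group G] [TopologicalSpace G] [IsTopologicalGroup G]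
    [TopologicalSpace X]
    [MulAction G X] [ProperSMul G X]
    (Δ : G →* ℝ) (hΔcont : Continuous Δ)
    (ξ η : X → ℂ) (hξ : Continuous ξ) (hξc : HasCompactSupport ξ)
    (hη : Continuous η) (hηc : HasCompactSupport η) :
    Continuous (fun p : G × X =>
        (((Δ p.1) ^ (-(1:ℝ)/2) : ℝ) : ℂ) * (starRingEnd ℂ) (ξ p.2) * η (p.1⁻¹ • p.2)) ∧
    HasCompactSupport (fun p : G × X =>
        (((Δ p.1) ^ (-(1:ℝ)/2) : ℝ) : ℂ) * (starRingEnd ℂ) (ξ p.2) * η (p.1⁻¹ • p.2)) := by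
  refine ⟨?_, ProperSMul.hasCompactSupport_mul_mul_inv_smul _
    (f := fun x => starRingEnd ℂ (ξ x)) (hξc.comp_left (map_zero _)) hηc⟩
  have hΔ : Continuous fun p : G × X => Δ p.1 ^ (-(1:ℝ)/2) :=
    (hΔcont.comp continuous_fst).rpow_const fun p => .inl ((Group.isUnit p.1).map Δ).ne_zero
  fun_prop

/-- If `G` acts properly on the locally compact Hausdorff space `X`, then for
`ξ, η ∈ C_c(X)` the map `(g,x) ↦ Δ(g)^{-1/2} · conj(ξ x) · η (g⁻¹ • x)` is continuous and has
compact support on `G × X`; i.e. it defines an element of `C_c(G, C_0(X))` with compact support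
in `G` uniformly in `x`. -/
theorem statement2 {G X : Type*} [Group G] [TopologicalSpace G] [IsTopologicalGroup G]
    [TopologicalSpace X] [T2Space X] [LocallyCompactSpace X]
    [MulAction G X] [ContinuousSMul G X] [ProperSMul G X]
    (Δ : G →* ℝ) (hΔpos : ∀ t, 0 < Δ t) (hΔcont : Continuous Δ)
    (ξ η : X → ℂ) (hξ : Continuous ξ) (hξc : HasCompactSupport ξ)
    (hη : Continuous η) (hηc : HasCompactSupport η) :
    Continuous (fun p : G × X =>
        (((Δ p.1) ^ (-(1:ℝ)/2) : ℝ) : ℂ) * (starRingEnd ℂ) (ξ p.2) * η (p.1⁻¹ • p.2)) ∧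
    HasCompactSupport (fun p : G × X =>
        (((Δ p.1) ^ (-(1:ℝ)/2) : ℝ) : ℂ) * (starRingEnd ℂ) (ξ p.2) * η (p.1⁻¹ • p.2)) :=
  statement2_general Δ hΔcont ξ η hξ hξc hη hηc
end

section
/- Let E ⊆ B(G) be a nonzero G-invariant weak-* closed ideal of the Fourier–Stieltjes algebra, identified with the dual of C*(G). Then the pre-annihilator ⊥E = {x ∈ C*(G) : f(x) = 0 for all f ∈ E} is a closed two-sided ideal of C*(G). -/
namespace WeakDual

theorem isClosed_setOf_forall_eq_zero {𝕜 E : Type*} [CommSemiring 𝕜] [TopologicalSpace 𝕜]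
    [ContinuousAdd 𝕜] [ContinuousConstSMul 𝕜 𝕜] [T1Space 𝕜] [AddCommMonoid E] [Module 𝕜 E]
    [TopologicalSpace E] (F : Set (WeakDual 𝕜 E)) :
    IsClosed {x : E | ∀ f ∈ F, f x = 0} := by
  simp only [Set.ofPred_forall]
  exact isClosed_biInter fun f _ => isClosed_singleton.preimage (f : StrongDual 𝕜 E).continuous

variable {𝕜 A : Type*} [NontriviallyNormedField 𝕜] [NormedRing A] [NormedAlgebra 𝕜 A]
  {S : Set A} {F : Set (WeakDual 𝕜 A)} {x : A}

/-- `a ↦ f (a * x)` is a continuous functional vanishing on `S`, hence on its dense span. -/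
theorem forall_map_mul_right_eq_zero (hS : Dense (Submodule.span 𝕜 S : Set A))
    (hF : ∀ f ∈ F, ∀ s ∈ S, ∃ g ∈ F, ∀ y : A, g y = f (s * y)) (hx : ∀ f ∈ F, f x = 0)
    (a : A) : ∀ f ∈ F, f (a * x) = 0 := by
  intro f hf
  have hzero : (f : StrongDual 𝕜 A).comp ((ContinuousLinearMap.mul 𝕜 A).flip x) = 0 := by
    refine ContinuousLinearMap.ext_on hS fun s hs => ?_
    obtain ⟨g, hg, hgf⟩ := hF f hf s hs
    change f (s * x) = 0
    rw [← hgf]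
    exact hx g hg
  exact congr($hzero a)

theorem forall_map_mul_left_eq_zero (hS : Dense (Submodule.span 𝕜 S : Set A))
    (hF : ∀ f ∈ F, ∀ s ∈ S, ∃ g ∈ F, ∀ y : A, g y = f (y * s)) (hx : ∀ f ∈ F, f x = 0)
    (a : A) : ∀ f ∈ F, f (x * a) = 0 := by
  intro f hf
  have hzero : (f : StrongDual 𝕜 A).comp (ContinuousLinearMap.mul 𝕜 A x) = 0 := by
    refine ContinuousLinearMap.ext_on hS fun s hs => ?_
    obtain ⟨g, hg, hgf⟩ := hF f hf s hs
    change f (x * s) = 0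
    rw [← hgf]
    exact hx g hg
  exact congr($hzero a)

end WeakDual

open WeakDual in
theorem statement5_general {G A : Type*} [Group G]
    [NormedRing A] [NormedAlgebra ℂ A]
    (u : G →* Aˣ)
    (hdense : Dense ((Submodule.span ℂ (Set.range fun s : G => ((u s : Aˣ) : A))) : Set A))
    (E : Set (WeakDual ℂ A))
    (hGinv : ∀ f ∈ E, ∀ s : G,
        (∃ fl ∈ E, ∀ x : A, fl x = f (((u s : Aˣ) : A) * x)) ∧
        (∃ fr ∈ E, ∀ x : A, fr x = f (x * ((u s : Aˣ) : A)))) :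
    IsClosed {x : A | ∀ f ∈ E, f x = 0} ∧
    (∀ x ∈ {x : A | ∀ f ∈ E, f x = 0}, ∀ y ∈ {x : A | ∀ f ∈ E, f x = 0},
        x + y ∈ {x : A | ∀ f ∈ E, f x = 0}) ∧
    (∀ x ∈ {x : A | ∀ f ∈ E, f x = 0}, ∀ c : ℂ, c • x ∈ {x : A | ∀ f ∈ E, f x = 0}) ∧
    (∀ x ∈ {x : A | ∀ f ∈ E, f x = 0}, ∀ a : A,
        a * x ∈ {x : A | ∀ f ∈ E, f x = 0} ∧ x * a ∈ {x : A | ∀ f ∈ E, f x = 0}) := by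
  refine ⟨isClosed_setOf_forall_eq_zero E, fun x hx y hy f hf => ?_,
    fun x hx c f hf => ?_, fun x hx a => ⟨?_, ?_⟩⟩
  · simp [hx f hf, hy f hf]
  · simp [hx f hf]
  · exact forall_map_mul_right_eq_zero hdense
      (by rintro f hf _ ⟨s, rfl⟩; exact (hGinv f hf s).1) hx a
  · exact forall_map_mul_left_eq_zero hdense
      (by rintro f hf _ ⟨s, rfl⟩; exact (hGinv f hf s).2) hx a

/-- Let `A` play the role of the full group C*-algebra `C*(G)`: the group `G`
is represented by unitaries (here invertible elements `u : G →* Aˣ`) whose linear span is dense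
in `A`.  The Fourier–Stieltjes algebra `B(G)` is identified with the dual `WeakDual ℂ A`.
If `E ⊆ WeakDual ℂ A` is a nonzero `G`-invariant weak-* closed subspace (invariance under the
left and right translations `f ↦ f(u_s · )`, `f ↦ f( · u_s)`), then the pre-annihilator
`⊥E = {x ∈ A : f x = 0 for all f ∈ E}` is a (norm-)closed two-sided ideal of `A`. -/
theorem statement5 {G A : Type*} [Group G]
    [NormedRing A] [StarRing A] [CStarRing A] [NormedAlgebra ℂ A] [StarModule ℂ A]
    [CompleteSpace A]
    (u : G →* Aˣ)
    (hdense : Dense ((Submodule.span ℂ (Set.range fun s : G => ((u s : Aˣ) : A))) : Set A))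
    (E : Set (WeakDual ℂ A)) (hne : E.Nonempty)
    (hadd : ∀ f ∈ E, ∀ g ∈ E, f + g ∈ E) (hsmul : ∀ f ∈ E, ∀ c : ℂ, c • f ∈ E)
    (hclosed : IsClosed E)
    (hGinv : ∀ f ∈ E, ∀ s : G,
        (∃ fl ∈ E, ∀ x : A, fl x = f (((u s : Aˣ) : A) * x)) ∧
        (∃ fr ∈ E, ∀ x : A, fr x = f (x * ((u s : Aˣ) : A)))) :
    IsClosed {x : A | ∀ f ∈ E, f x = 0} ∧
    (∀ x ∈ {x : A | ∀ f ∈ E, f x = 0}, ∀ y ∈ {x : A | ∀ f ∈ E, f x = 0},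
        x + y ∈ {x : A | ∀ f ∈ E, f x = 0}) ∧
    (∀ x ∈ {x : A | ∀ f ∈ E, f x = 0}, ∀ c : ℂ, c • x ∈ {x : A | ∀ f ∈ E, f x = 0}) ∧
    (∀ x ∈ {x : A | ∀ f ∈ E, f x = 0}, ∀ a : A,
        a * x ∈ {x : A | ∀ f ∈ E, f x = 0} ∧ x * a ∈ {x : A | ∀ f ∈ E, f x = 0}) :=
  statement5_general u hdense E hGinv
end

section
/- Let (E,γ) be a weakly proper (B, X⋊G)-module. For ξ, η ∈ F_c(E) := C_c(X)·E define ⟨⟨ξ,η⟩⟩(t) = Δ(t)^{-1/2} ⟨ξ, γ_t(η)⟩_B. Then ⟨⟨ξ,η⟩⟩ belongs to C_c(G,B): it is continuous and compactly supported in t, because the G-action on X is proper. -/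
open MeasureTheory

noncomputable section

open scoped Pointwise

/-!
Writing `γ_t (g·η) = (g ∘ t⁻¹)·γ_t η` and moving `f` across the inner product, the value at `t`
is `⟨ξ₀, (f̄ · (g ∘ t⁻¹))·γ_t η₀⟩`, which vanishes unless `t • supp g` meets `supp f`. By
properness of the action the set of such `t` is compact; continuity comes from the strong
continuity of `γ`.
-/

theorem inner_act_act_eq_zero_of_disjoint_support {X B E : Type*} [Zero B]
    (inner : E → E → B) (act : (X → ℂ) → E → E)
    (hadj : ∀ (f : X → ℂ) (a b : E),
        inner (act f a) b = inner a (act (fun x => (starRingEnd ℂ) (f x)) b))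
    (hcomp : ∀ (f g : X → ℂ) (e : E), act f (act g e) = act (fun x => f x * g x) e)
    (hzero : ∀ (a e : E), inner a (act (fun _ => (0:ℂ)) e) = 0)
    {f g : X → ℂ} (hfg : Disjoint (Function.support f) (Function.support g)) (a b : E) :
    inner (act f a) (act g b) = 0 := by
  have hprod : (fun x => (starRingEnd ℂ) (f x) * g x) = fun _ => 0 := by
    funext x
    by_cases hfx : f x = 0
    · simp [hfx]
    · have hgx : g x = 0 := Function.notMem_support.mp (Set.disjoint_left.mp hfg hfx)
      simp [hgx]
  rw [hadj, hcomp, hprod, hzero]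

theorem statement8_general {G X B E : Type*} [Group G] [TopologicalSpace G] [IsTopologicalGroup G]
    [TopologicalSpace X]
    [MulAction G X] [ProperSMul G X]
    [NormedRing B] [NormedAlgebra ℂ B]
    [NormedAddCommGroup E] [NormedSpace ℂ E]
    (γ : G →* (E ≃ₗ[ℂ] E))
    (inner : E → E → B)
    (act : (X → ℂ) → E → E)
    (hadj : ∀ (f : X → ℂ) (a b : E),
        inner (act f a) b = inner a (act (fun x => (starRingEnd ℂ) (f x)) b))
    (hcomp : ∀ (f g : X → ℂ) (e : E), act f (act g e) = act (fun x => f x * g x) e)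
    (hzero : ∀ (a e : E), inner a (act (fun _ => (0:ℂ)) e) = 0)
    (hactequiv : ∀ (t : G) (g : X → ℂ) (e : E),
        γ t (act g e) = act (fun x => g (t⁻¹ • x)) (γ t e))
    (Δ : G →* ℝ) (hΔpos : ∀ t, 0 < Δ t) (hΔcont : Continuous Δ)
    (hstrong : ∀ e : E, Continuous fun t : G => γ t e)
    (hinnercont : ∀ a : E, Continuous fun e : E => inner a e)
    (f g : X → ℂ) (hfc : HasCompactSupport f)
    (hgc : HasCompactSupport g)
    (ξ₀ η₀ : E) :
    Continuous (fun t : G =>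
        ((Δ t) ^ (-(1:ℝ)/2)) • inner (act f ξ₀) (γ t (act g η₀))) ∧
    HasCompactSupport (fun t : G =>
        ((Δ t) ^ (-(1:ℝ)/2)) • inner (act f ξ₀) (γ t (act g η₀))) := by
  refine ⟨?_, ?_⟩
  · exact (hΔcont.rpow_const fun t => Or.inl (hΔpos t).ne').smul
      ((hinnercont _).comp (hstrong _))
  · refine HasCompactSupport.intro
      (ProperSMul.isCompact_setOfPred_inter_nonempty (G := G) hgc hfc) fun t ht => ?_
    have hdisj : Disjoint (Function.support f) (Function.support fun x => g (t⁻¹ • x)) := by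
      rw [support_comp_inv_smul]
      refine Disjoint.mono (subset_tsupport f) (Set.smul_set_mono (subset_tsupport g)) ?_
      rw [Set.disjoint_iff_inter_eq_empty, Set.inter_comm]
      exact Set.not_nonempty_iff_eq_empty.mp ht
    rw [hactequiv, inner_act_act_eq_zero_of_disjoint_support inner act hadj hcomp hzero hdisj,
      smul_zero]

/-- Let `(E,γ)` be a weakly proper `(B, X⋊G)`-module, with structure map given
by the module action `act` of functions on `X` on `E`.  For `ξ = f·ξ₀` and `η = g·η₀` in
`F_c(E) = C_c(X)·E`, the function `t ↦ Δ(t)^{-1/2} ⟨ξ, γ_t η⟩_B` is continuous and compactly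
supported (by properness of the `G`-action on `X`), i.e. belongs to `C_c(G,B)`. -/
theorem statement8 {G X B E : Type*} [Group G] [TopologicalSpace G] [IsTopologicalGroup G]
    [TopologicalSpace X] [T2Space X] [LocallyCompactSpace X]
    [MulAction G X] [ContinuousSMul G X] [ProperSMul G X]
    [NormedRing B] [StarRing B] [CStarRing B] [NormedAlgebra ℂ B] [CompleteSpace B]
    [NormedAddCommGroup E] [NormedSpace ℂ E]
    (β : G →* (B ≃ₐ[ℂ] B)) (hβstar : ∀ (t : G) (b : B), β t (star b) = star (β t b))
    (γ : G →* (E ≃ₗ[ℂ] E))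
    (inner : E → E → B)
    (hequiv : ∀ (s : G) (a b : E), inner (γ s a) (γ s b) = β s (inner a b))
    (act : (X → ℂ) → E → E)
    (hadj : ∀ (f : X → ℂ) (a b : E),
        inner (act f a) b = inner a (act (fun x => (starRingEnd ℂ) (f x)) b))
    (hcomp : ∀ (f g : X → ℂ) (e : E), act f (act g e) = act (fun x => f x * g x) e)
    (hzero : ∀ (a e : E), inner a (act (fun _ => (0:ℂ)) e) = 0)
    (hactequiv : ∀ (t : G) (g : X → ℂ) (e : E),
        γ t (act g e) = act (fun x => g (t⁻¹ • x)) (γ t e))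
    (Δ : G →* ℝ) (hΔpos : ∀ t, 0 < Δ t) (hΔcont : Continuous Δ)
    (hstrong : ∀ e : E, Continuous fun t : G => γ t e)
    (hinnercont : ∀ a : E, Continuous fun e : E => inner a e)
    (f g : X → ℂ) (hf : Continuous f) (hfc : HasCompactSupport f)
    (hg : Continuous g) (hgc : HasCompactSupport g)
    (ξ₀ η₀ : E) :
    Continuous (fun t : G =>
        ((Δ t) ^ (-(1:ℝ)/2)) • inner (act f ξ₀) (γ t (act g η₀))) ∧
    HasCompactSupport (fun t : G =>
        ((Δ t) ^ (-(1:ℝ)/2)) • inner (act f ξ₀) (γ t (act g η₀))) :=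
  statement8_general γ inner act hadj hcomp hzero hactequiv Δ hΔpos hΔcont hstrong hinnercont f g
    hfc hgc ξ₀ η₀
end
end

section
/- Let (B,β) be a G-C*-algebra and consider L²(G,B) with the diagonal action (ρ⊗β), where ρ is right translation: ((ρ⊗β)_s x)(t) = β_s(x(ts)). Then for x, y ∈ C_c(G,B) ⊆ L²(G,B), the fixed-module inner product Δ(t)^{-1/2}⟨x, (ρ⊗β)_t(y)⟩_B equals ∫_G ⟨x(s), β_t(y(st))⟩ ds, i.e., equals the standard C_c(G,B)-valued crossed-product inner product ⟨x,y⟩(t) = ∫_G β_{s⁻¹}(⟨x(s),y(st)⟩) ds after applying the transformation U(x)(t) = β_t(x(t)). -/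
open MeasureTheory

noncomputable section

lemma rpow_neg_half_smul_integral_rpow_half_smul {α E : Type*} [MeasurableSpace α]
    [NormedAddCommGroup E] [NormedSpace ℝ E] (μ : Measure α) {r : ℝ} (hr : 0 < r)
    (f : α → E) :
    r ^ (-(1:ℝ)/2) • ∫ s, r ^ ((1:ℝ)/2) • f s ∂μ = ∫ s, f s ∂μ := by
  rw [integral_smul, smul_smul, ← Real.rpow_add hr]
  norm_num

lemma map_inv_apply_star_map_mul_map_mul {G B : Type*} [Group G] [Ring B] [StarRing B]
    [Algebra ℂ B] (β : G →* (B ≃ₐ[ℂ] B)) (hβstar : ∀ (t : G) (b : B), β t (star b) = star (β t b))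
    (s t : G) (a b : B) :
    β s⁻¹ (star (β s a) * β (s * t) b) = star a * β t b := by
  have hβmul : ∀ (g h : G) (c : B), β g (β h c) = β (g * h) c := fun g h c => by
    rw [β.map_mul]; rfl
  rw [← hβstar, map_mul, hβmul, hβmul, inv_mul_cancel, inv_mul_cancel_left, β.map_one]
  rfl

theorem statement16_general {G B : Type*} [Group G] [TopologicalSpace G] [IsTopologicalGroup G]
    [MeasurableSpace G] [BorelSpace G] [LocallyCompactSpace G]
    [NormedRing B] [StarRing B] [NormedAlgebra ℂ B]
    (β : G →* (B ≃ₐ[ℂ] B)) (hβstar : ∀ (t : G) (b : B), β t (star b) = star (β t b))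
    (Δ : G →* ℝ) (hΔpos : ∀ t, 0 < Δ t)
    (x y : G → B) :
    ∀ t : G,
      (((Δ t) ^ (-(1:ℝ)/2)) •
          ∫ s, star (x s) * (((Δ t) ^ ((1:ℝ)/2)) • β t (y (s * t)))
            ∂(Measure.haar : Measure G))
        = (∫ s, star (x s) * β t (y (s * t)) ∂(Measure.haar : Measure G)) ∧
      (∫ s, β s⁻¹ (star (β s (x s)) * β (s * t) (y (s * t))) ∂(Measure.haar : Measure G))
        = ∫ s, star (x s) * β t (y (s * t)) ∂(Measure.haar : Measure G) := by
  intro t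
  constructor
  · simp only [mul_smul_comm]
    exact rpow_neg_half_smul_integral_rpow_half_smul _ (hΔpos t) _
  · simp only [map_inv_apply_star_map_mul_map_mul β hβstar]

/-- For the weakly proper `(B, G⋊G)`-module `L²(G,B)` with diagonal action
`((ρ⊗β)_s x)(t) = Δ(s)^{1/2} β_s(x(ts))`, the fixed-module inner product
`Δ(t)^{-1/2}⟨x, (ρ⊗β)_t y⟩_B` equals `∫ ⟨x(s), β_t(y(st))⟩ ds`, and this coincides with the
standard `C_c(G,B)`-valued crossed-product inner product after applying `U(x)(t)=β_t(x(t))`. -/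
theorem statement16 {G B : Type*} [Group G] [TopologicalSpace G] [IsTopologicalGroup G]
    [MeasurableSpace G] [BorelSpace G] [LocallyCompactSpace G]
    [NormedRing B] [StarRing B] [CStarRing B] [NormedAlgebra ℂ B] [StarModule ℂ B]
    [CompleteSpace B]
    (β : G →* (B ≃ₐ[ℂ] B)) (hβstar : ∀ (t : G) (b : B), β t (star b) = star (β t b))
    (Δ : G →* ℝ) (hΔpos : ∀ t, 0 < Δ t)
    (x y : G → B) (hx : Continuous x) (hxc : HasCompactSupport x)
    (hy : Continuous y) (hyc : HasCompactSupport y) :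
    ∀ t : G,
      (((Δ t) ^ (-(1:ℝ)/2)) •
          ∫ s, star (x s) * (((Δ t) ^ ((1:ℝ)/2)) • β t (y (s * t)))
            ∂(Measure.haar : Measure G))
        = (∫ s, star (x s) * β t (y (s * t)) ∂(Measure.haar : Measure G)) ∧
      (∫ s, β s⁻¹ (star (β s (x s)) * β (s * t) (y (s * t))) ∂(Measure.haar : Measure G))
        = ∫ s, star (x s) * β t (y (s * t)) ∂(Measure.haar : Measure G) :=
  statement16_general β hβstar Δ hΔpos x y
end
end

section
/- In the symmetric imprimitivity setting, for ξ, η ∈ A_c and h ∈ H, the formulas ⟨⟨ξ,η⟩⟩_H(h) = Δ_H(h)^{-1/2} ∫_G^{st} α_s(ξ α_h(η*)) ds and ⟨⟨ξ,η⟩⟩_G(s) = Δ_G(s)^{-1/2} ∫_H^{st} α_l(ξ* α_s(η)) dl satisfy the associativity relation ⟨⟨ξ,η⟩⟩_H · ζ = ξ · ⟨⟨η,ζ⟩⟩_G for all ζ ∈ A_c, where f·ξ = ∫_H Δ_H(l)^{1/2} f(l) α_l(ξ) dl and ξ·ψ = ∫_G Δ_G(t)^{-1/2} α_t(ξψ(t⁻¹))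 dt. -/
/-!
Both sides are iterated integrals of `(s, l) ↦ α_s(ξ α_l(η*)) α_l(ζ)`, a continuous compactly
supported function on `G × H`, so Fubini identifies them. On the left the two powers of `Δ_H`
cancel. On the right the powers of `Δ_G(t)` and `Δ_G(t⁻¹) = Δ_G(t)⁻¹` cancel, `α_t` passes
through the Bochner integral because a `*`-automorphism of a C⋆-algebra is isometric, and
`α_t α_l = α_l α_t` turns `α_t(ξ α_l(η* α_{t⁻¹}(ζ)))` into `α_t(ξ α_l(η*)) α_l(ζ)`.
-/

open MeasureTheory

theorem Real.rpow_smul_rpow_smul_of_add_eq_zero {E : Type*} [AddCommMonoid E] [Module ℝ E]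
    {x r s : ℝ} (hx : 0 < x) (hrs : r + s = 0) (v : E) : x ^ r • x ^ s • v = v := by
  rw [smul_smul, ← Real.rpow_add hx, hrs, Real.rpow_zero, one_smul]

theorem Real.rpow_smul_inv_rpow_smul {E : Type*} [AddCommMonoid E] [Module ℝ E]
    {x : ℝ} (hx : 0 < x) (r : ℝ) (v : E) : x ^ r • x⁻¹ ^ r • v = v := by
  rw [Real.inv_rpow hx.le, ← Real.rpow_neg hx.le]
  exact Real.rpow_smul_rpow_smul_of_add_eq_zero hx (add_neg_cancel r) v

theorem AlgEquiv.integral_comp_comm_of_map_star {X A B : Type*} [MeasurableSpace X]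
    [CStarAlgebra A] [CStarAlgebra B] (μ : Measure X) (e : A ≃ₐ[ℂ] B)
    (he : ∀ a, e (star a) = star (e a)) (φ : X → A) :
    ∫ x, e (φ x) ∂μ = e (∫ x, φ x ∂μ) :=
  LinearIsometry.integral_comp_comm
    ⟨e.toLinearMap, StarAlgEquiv.norm_map (StarAlgEquiv.ofAlgEquiv e he)⟩ φ

theorem AlgEquiv.map_mul_map_mul_symm_of_commute {R A : Type*} [CommSemiring R] [Semiring A]
    [Algebra R A] (e : A ≃ₐ[R] A) (f : A →ₐ[R] A) (hef : ∀ a, e (f a) = f (e a))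
    (x y z : A) : e (x * f (y * e.symm z)) = e (x * f y) * f z := by
  rw [map_mul f, ← mul_assoc, map_mul e _ (f _), hef, e.apply_symm_apply]

theorem statement18_general {G H A : Type*}
    [Group G] [TopologicalSpace G] [IsTopologicalGroup G]
    [MeasurableSpace G] [BorelSpace G] [LocallyCompactSpace G]
    [Group H] [TopologicalSpace H] [IsTopologicalGroup H]
    [MeasurableSpace H] [BorelSpace H] [LocallyCompactSpace H]
    [NormedRing A] [StarRing A] [CStarRing A] [NormedAlgebra ℂ A] [StarModule ℂ A]
    [CompleteSpace A]
    (αG : G →* (A ≃ₐ[ℂ] A)) (hαGstar : ∀ (t : G) (a : A), αG t (star a) = star (αG t a))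
    (αH : H →* (A ≃ₐ[ℂ] A))
    (hcommute : ∀ (t : G) (l : H) (a : A), αG t (αH l a) = αH l (αG t a))
    (ΔG : G →* ℝ) (hΔGpos : ∀ t, 0 < ΔG t)
    (ΔH : H →* ℝ) (hΔHpos : ∀ l, 0 < ΔH l)
    (ξ η ζ : A)
    -- compact supports of the integrands (coming from `ξ, η, ζ ∈ A_c` and properness)
    (hcont1 : Continuous fun p : G × H => αG p.1 (ξ * αH p.2 (star η)) * αH p.2 ζ)
    (hsupp1 : HasCompactSupport fun p : G × H => αG p.1 (ξ * αH p.2 (star η)) * αH p.2 ζ) :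
    (∫ l, ((ΔH l) ^ ((1:ℝ)/2)) •
        (((ΔH l) ^ (-(1:ℝ)/2)) •
          ∫ s, αG s (ξ * αH l (star η)) * αH l ζ ∂(Measure.haar : Measure G))
        ∂(Measure.haar : Measure H))
      = ∫ t, ((ΔG t) ^ (-(1:ℝ)/2)) •
          αG t (((ΔG t⁻¹) ^ (-(1:ℝ)/2)) •
            ∫ l, ξ * αH l (star η * αG t⁻¹ ζ) ∂(Measure.haar : Measure H))
          ∂(Measure.haar : Measure G) := by
  let : CStarAlgebra A := ⟨⟩
  calc _ = ∫ l, ∫ s, αG s (ξ * αH l (star η)) * αH l ζ ∂Measure.haar ∂Measure.haar :=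
        integral_congr_ae <| .of_forall fun l =>
          Real.rpow_smul_rpow_smul_of_add_eq_zero (hΔHpos l) (by norm_num) _
    _ = ∫ t, ∫ l, αG t (ξ * αH l (star η)) * αH l ζ ∂Measure.haar ∂Measure.haar :=
        (integral_integral_swap_of_hasCompactSupport
          (f := fun t l => αG t (ξ * αH l (star η)) * αH l ζ) hcont1 hsupp1).symm
    _ = _ := by
        refine integral_congr_ae <| .of_forall fun t => ?_
        dsimp only
        have hαG_inv : αG t⁻¹ = (αG t).symm := map_inv αG t
        rw [LinearMapClass.map_smul_of_tower (αG t), map_inv ΔG,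
          Real.rpow_smul_inv_rpow_smul (hΔGpos t),
          ← AlgEquiv.integral_comp_comm_of_map_star _ _ (hαGstar t), hαG_inv]
        exact integral_congr_ae <| .of_forall fun l =>
          ((αG t).map_mul_map_mul_symm_of_commute (αH l) (hcommute t l) _ _ _).symm

/-- Symmetric imprimitivity associativity: for `ξ, η, ζ ∈ A_c` the
`C_c(H, A_c^G)`- and `C_c(G, A_c^H)`-valued inner products satisfy
`⟨⟨ξ,η⟩⟩_H · ζ = ξ · ⟨⟨η,ζ⟩⟩_G`.  Unfolding the strict unconditional integrals against
elements of `A_c` (which is how they are characterized), this is the displayed identity of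
Bochner integrals below.  `αG, αH` are the commuting actions of `G` and `H` on `A`. -/
theorem statement18 {G H A : Type*}
    [Group G] [TopologicalSpace G] [IsTopologicalGroup G]
    [MeasurableSpace G] [BorelSpace G] [LocallyCompactSpace G]
    [Group H] [TopologicalSpace H] [IsTopologicalGroup H]
    [MeasurableSpace H] [BorelSpace H] [LocallyCompactSpace H]
    [NormedRing A] [StarRing A] [CStarRing A] [NormedAlgebra ℂ A] [StarModule ℂ A]
    [CompleteSpace A]
    (αG : G →* (A ≃ₐ[ℂ] A)) (hαGstar : ∀ (t : G) (a : A), αG t (star a) = star (αG t a))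
    (αH : H →* (A ≃ₐ[ℂ] A)) (hαHstar : ∀ (l : H) (a : A), αH l (star a) = star (αH l a))
    (hcommute : ∀ (t : G) (l : H) (a : A), αG t (αH l a) = αH l (αG t a))
    (ΔG : G →* ℝ) (hΔGpos : ∀ t, 0 < ΔG t)
    (ΔH : H →* ℝ) (hΔHpos : ∀ l, 0 < ΔH l)
    (ξ η ζ : A)
    -- compact supports of the integrands (coming from `ξ, η, ζ ∈ A_c` and properness)
    (hcont1 : Continuous fun p : G × H => αG p.1 (ξ * αH p.2 (star η)) * αH p.2 ζ)
    (hsupp1 : HasCompactSupport fun p : G × H => αG p.1 (ξ * αH p.2 (star η)) * αH p.2 ζ)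
    (hcont2 : Continuous fun p : G × H => αG p.1 (ξ * αH p.2 (star η * αG p.1⁻¹ ζ)))
    (hsupp2 : HasCompactSupport fun p : G × H =>
        αG p.1 (ξ * αH p.2 (star η * αG p.1⁻¹ ζ))) :
    (∫ l, ((ΔH l) ^ ((1:ℝ)/2)) •
        (((ΔH l) ^ (-(1:ℝ)/2)) •
          ∫ s, αG s (ξ * αH l (star η)) * αH l ζ ∂(Measure.haar : Measure G))
        ∂(Measure.haar : Measure H))
      = ∫ t, ((ΔG t) ^ (-(1:ℝ)/2)) •
          αG t (((ΔG t⁻¹) ^ (-(1:ℝ)/2)) •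
            ∫ l, ξ * αH l (star η * αG t⁻¹ ζ) ∂(Measure.haar : Measure H))
          ∂(Measure.haar : Measure G) :=
  statement18_general αG hαGstar αH hcommute ΔG hΔGpos ΔH hΔHpos ξ η ζ hcont1 hsupp1
end

section
/- Let A be a proper X⋊G-algebra with central structure map φ : C_0(X) → ZM(A). Then the generalized fixed-point algebra with compact supports A_c^G is contained in Kasparov's fixed-point algebra A^G := C_0(G\X)·{m ∈ M(A)^G : C_0(X)·m ⊆ A}, and the set {m ∈ M(A)^G : C_0(X)·m ⊆ A} is a norm-closed subalgebra of M(A); consequently the closure of A_c^G in M(A) is contained in A^G. -/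
open scoped BoundedContinuousFunction

noncomputable section

/-!
Given `m` in the closure of `A_c^G`, write `m = ∑ₖ bₖ` with `bₖ = aₖ₊₁ - aₖ`, `aₖ ∈ A_c^G`,
`a₀ = 0` and `‖bₖ‖ = O(4⁻ᵏ)`. Each `bₖ` is supported over a compact set `Sₖ ⊆ G\X`; with
Urysohn functions `Uₖ = 1` on `Sₖ`, the function `T = ∑ₖ 2⁻ᵏ Uₖ` lies in `C_0(G\X)` and
`wₖ = 1 / max(T, 2⁻ᵏ)` has norm `≤ 2ᵏ` and satisfies `T wₖ = 1` on `Sₖ`. Hence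
`n = ∑ₖ wₖ bₖ` converges, lies in the closed space `{m ∈ M(A)^G : C_0(X)·m ⊆ A}`, and
`m = T · n` is in Kasparov's fixed-point algebra. The inclusion `A_c^G ⊆ A^G` follows from
the density of `C_c(X)` in `C_0(X)` and the closedness of `A` in `M(A)`.
-/

open Filter Topology
open scoped ZeroAtInfty CStarAlgebra

theorem IsOpenMap.exists_isCompact_image_superset {X Y : Type*} [TopologicalSpace X]
    [TopologicalSpace Y] [WeaklyLocallyCompactSpace X] {f : X → Y} (hf : IsOpenMap f)
    (hsurj : Function.Surjective f) {s : Set Y} (hs : IsCompact s) :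
    ∃ K, IsCompact K ∧ s ⊆ f '' K := by
  have hnhds : ∀ y, ∃ C, IsCompact C ∧ f '' C ∈ 𝓝 y := hsurj.forall.2 fun x => by
    obtain ⟨C, hC, hCx⟩ := exists_compact_mem_nhds x
    exact ⟨C, hC, hf.image_mem_nhds hCx⟩
  choose C hC hCy using hnhds
  obtain ⟨t, -, ht⟩ := hs.elim_nhds_subcover (fun y => f '' C y) fun y _ => hCy y
  exact ⟨⋃ y ∈ t, C y, t.isCompact_biUnion fun y _ => hC y, ht.trans (Set.image_iUnion₂ _ _).ge⟩

instance MulAction.weaklyLocallyCompactSpace_quotient {G X : Type*} [Group G]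
    [TopologicalSpace X] [MulAction G X] [ContinuousConstSMul G X] [WeaklyLocallyCompactSpace X] :
    WeaklyLocallyCompactSpace (Quotient (MulAction.orbitRel G X)) :=
  MulAction.isOpenQuotientMap_quotientMk.weaklyLocallyCompactSpace

theorem exists_zeroAtInfty_mul_eq_one {Q : Type*} [TopologicalSpace Q] [T2Space Q]
    [LocallyCompactSpace Q] (S : ℕ → Set Q) (hS : ∀ k, IsCompact (S k)) :
    ∃ T : C₀(Q, ℝ), ∃ w : ℕ → Q →ᵇ ℝ, ∀ k, ‖w k‖ ≤ 2 ^ k ∧ ∀ y ∈ S k, T y * w k y = 1 := by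
  choose U hU1 _ hUc hU01 using fun k =>
    exists_continuous_one_zero_of_isCompact (hS k) isClosed_empty (Set.disjoint_empty _)
  let U' : ℕ → C₀(Q, ℝ) := fun k => ⟨U k, (hUc k).is_zero_at_infty⟩
  have hU'norm : ∀ k, ‖(2⁻¹ : ℝ) ^ k • U' k‖ ≤ (2⁻¹ : ℝ) ^ k := fun k => by
    rw [norm_smul, norm_pow, norm_inv, Real.norm_two, ← ZeroAtInftyContinuousMap.norm_toBCF_eq_norm]
    refine mul_le_of_le_one_right (by positivity)
      ((BoundedContinuousFunction.norm_le zero_le_one).2 fun y => ?_)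
    simpa [abs_le, U'] using ⟨(hU01 k y).1.trans' (by norm_num), (hU01 k y).2⟩
  set T := ∑' k, (2⁻¹ : ℝ) ^ k • U' k
  have hT : ∀ y, HasSum (fun k => (2⁻¹ : ℝ) ^ k * U k y) (T y) := fun y =>
    (Summable.of_norm_bounded (summable_geometric_of_lt_one (by norm_num) (by norm_num))
      hU'norm).hasSum.map (⟨⟨fun F : C₀(Q, ℝ) => F y, rfl⟩, fun _ _ => rfl⟩ : C₀(Q, ℝ) →+ ℝ)
      ((continuous_eval_const y).comp ZeroAtInftyContinuousMap.isometry_toBCF.continuous)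
  have hTlow : ∀ k, ∀ y ∈ S k, (2⁻¹ : ℝ) ^ k ≤ T y := fun k y hy => by
    simpa [hU1 k hy] using le_hasSum (hT y) k fun j _ => mul_nonneg (by positivity) (hU01 j y).1
  have hpos : ∀ k y, 0 < max (T y) ((2⁻¹ : ℝ) ^ k) := fun k y => lt_max_of_lt_right (by positivity)
  refine ⟨T, fun k => BoundedContinuousFunction.ofNormedAddCommGroup
    (fun y => (max (T y) ((2⁻¹ : ℝ) ^ k))⁻¹)
    ((T.continuous.max continuous_const).inv₀ fun y => (hpos k y).ne') (2 ^ k) fun y => ?_,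
    fun k => ⟨BoundedContinuousFunction.norm_ofNormedAddCommGroup_le _ (by positivity) _,
      fun y hy => ?_⟩⟩
  · rw [norm_inv, Real.norm_of_nonneg (hpos k y).le]
    calc _ ≤ ((2⁻¹ : ℝ) ^ k)⁻¹ := inv_anti₀ (by positivity) (le_max_right _ _)
      _ = 2 ^ k := by rw [inv_pow, inv_inv]
  · simp only [BoundedContinuousFunction.coe_ofNormedAddCommGroup]
    rw [max_eq_left (hTlow k y hy)]
    exact mul_inv_cancel₀ ((pow_pos (by norm_num) k).trans_le (hTlow k y hy)).ne'

theorem exists_hasSum_sub_of_mem_closure {E : Type*} [SeminormedAddCommGroup E] {S : Set E}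
    {m : E} (h0 : (0 : E) ∈ S) (hm : m ∈ closure S) {r : ℝ} (hr0 : 0 < r) (hr1 : r < 1) :
    ∃ a : ℕ → E, (∀ k, a k ∈ S) ∧ HasSum (fun k => a (k + 1) - a k) m ∧
      ∀ k, ‖a (k + 1) - a k‖ ≤ 2 * (‖m‖ + 1) * r ^ k := by
  choose a' ha'S ha' using fun k : ℕ => Metric.mem_closure_iff.1 hm (r ^ (k + 1)) (by positivity)
  let a : ℕ → E := fun | 0 => 0 | k + 1 => a' k
  have ha : ∀ k, ‖m - a k‖ ≤ (‖m‖ + 1) * r ^ k := fun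
    | 0 => by simp [a]
    | k + 1 => by
      rw [← dist_eq_norm]
      exact (ha' k).le.trans (le_mul_of_one_le_left (by positivity) (by linarith [norm_nonneg m]))
  have hdiff : ∀ k, ‖a (k + 1) - a k‖ ≤ 2 * (‖m‖ + 1) * r ^ k := fun k => by
    calc ‖a (k + 1) - a k‖ = ‖(m - a k) - (m - a (k + 1))‖ := by abel_nf
      _ ≤ (‖m‖ + 1) * r ^ k + (‖m‖ + 1) * r ^ (k + 1) := norm_sub_le_of_le (ha k) (ha (k + 1))
      _ ≤ 2 * (‖m‖ + 1) * r ^ k := by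
        have hC : 0 ≤ (‖m‖ + 1) * r ^ k := by positivity
        rw [pow_succ, ← mul_assoc]; nlinarith
  have hlim : Tendsto a atTop (𝓝 m) := tendsto_iff_norm_sub_tendsto_zero.2 <|
    squeeze_zero (fun _ => norm_nonneg _) (fun k => (norm_sub_rev _ _).trans_le (ha k))
      (by simpa using (tendsto_pow_atTop_nhds_zero_of_lt_one hr0.le hr1).const_mul (‖m‖ + 1))
  refine ⟨a, fun | 0 => h0 | k + 1 => ha'S k, ?_, hdiff⟩
  rw [hasSum_iff_tendsto_nat_of_summable_norm (Summable.of_nonneg_of_le (fun _ => norm_nonneg _)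
    hdiff ((summable_geometric_of_lt_one hr0.le hr1).mul_left _))]
  simpa only [Finset.sum_range_sub, show a 0 = 0 from rfl, sub_zero] using hlim

section OrbitFunctions

variable (G X : Type*) [Group G] [TopologicalSpace X] [MulAction G X]

def zeroAtInftySet : Set (X →ᵇ ℂ) :=
  {f | ∀ ε > (0 : ℝ), ∃ K : Set X, IsCompact K ∧ ∀ x ∉ K, ‖f x‖ < ε}

/-- `C_c(G\X)`, realised as the `G`-invariant functions on `X` vanishing off `G·K` for some
compact `K ⊆ X`. -/
def orbitCompactSet : Set (X →ᵇ ℂ) :=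
  {h | (∀ (t : G) (x : X), h (t • x) = h x) ∧
    ∃ K : Set X, IsCompact K ∧ ∀ x : X, (∀ t : G, t⁻¹ • x ∉ K) → h x = 0}

def orbitZeroAtInftySet : Set (X →ᵇ ℂ) :=
  {h | (∀ (t : G) (x : X), h (t • x) = h x) ∧ ∀ ε > (0 : ℝ), ∃ K : Set X, IsCompact K ∧
    ∀ x : X, (∀ t : G, t⁻¹ • x ∉ K) → ‖h x‖ < ε}

variable {G X}

theorem orbitCompactSet_subset_orbitZeroAtInftySet :
    orbitCompactSet G X ⊆ orbitZeroAtInftySet G X :=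
  fun _ ⟨hinv, K, hK, hzero⟩ =>
    ⟨hinv, fun _ hε => ⟨K, hK, fun x hx => by rwa [hzero x hx, norm_zero]⟩⟩

theorem zeroAtInftySet_subset_closure [T2Space X] [LocallyCompactSpace X] :
    zeroAtInftySet X ⊆ closure {f | HasCompactSupport f} := by
  intro f hf
  refine Metric.mem_closure_iff.2 fun ε hε => ?_
  obtain ⟨K, hK, hfK⟩ := hf (ε / 2) (half_pos hε)
  obtain ⟨χ, hχ1, -, hχc, hχ01⟩ :=
    exists_continuous_one_zero_of_isCompact hK isClosed_empty (Set.disjoint_empty _)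
  have hχle : ∀ x, ‖((χ x : ℝ) : ℂ)‖ ≤ 1 := fun x => by
    simpa [abs_le] using ⟨(hχ01 x).1.trans' (by norm_num), (hχ01 x).2⟩
  let χ' : X →ᵇ ℂ := .ofNormedAddCommGroup (fun x => (χ x : ℂ))
    (Complex.continuous_ofReal.comp χ.continuous) 1 hχle
  refine ⟨f * χ', (hχc.comp_left Complex.ofReal_zero).mul_left, ?_⟩
  refine ((BoundedContinuousFunction.dist_le (half_pos hε).le).2 fun x => ?_).trans_lt
    (half_lt_self hε)
  rw [dist_eq_norm, BoundedContinuousFunction.mul_apply, ← mul_one_sub, norm_mul]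
  by_cases hx : x ∈ K
  · simpa [χ', hχ1 hx] using (half_pos hε).le
  · refine (mul_le_of_le_one_right (norm_nonneg _) ?_).trans (hfK x hx).le
    have h1 : (1 : ℂ) - χ' x = ((1 - χ x : ℝ) : ℂ) := by simp [χ']
    rw [h1, Complex.norm_real, Real.norm_eq_abs, abs_le]
    constructor <;> linarith [(hχ01 x).1, (hχ01 x).2]

theorem BoundedContinuousFunction.mul_eq_right_of_eq_one_on_orbits {u p : X →ᵇ ℂ} {K : Set X}
    (hu : ∀ x, (∃ t : G, t⁻¹ • x ∈ K) → u x = 1) (hp : ∀ x, (∀ t : G, t⁻¹ • x ∉ K) → p x = 0) :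
    u * p = p := by
  ext x
  by_cases hx : ∃ t : G, t⁻¹ • x ∈ K
  · simp [hu x hx]
  · simp [hp x (not_exists.1 hx)]

theorem exists_orbitZeroAtInftySet_mul_eq_one [TopologicalSpace G] [ProperSMul G X]
    [LocallyCompactSpace X] (K : ℕ → Set X) (hK : ∀ k, IsCompact (K k)) :
    ∃ h ∈ orbitZeroAtInftySet G X, ∃ g : ℕ → X →ᵇ ℂ, ∀ k, (∀ (t : G) (x : X), g k (t • x) = g k x) ∧
      ‖g k‖ ≤ 2 ^ k ∧ ∀ x, (∃ t : G, t⁻¹ • x ∈ K k) → h x * g k x = 1 := by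
  let q : X → Quotient (MulAction.orbitRel G X) := Quotient.mk _
  have hq : IsOpenQuotientMap q := MulAction.isOpenQuotientMap_quotientMk
  have hqsmul : ∀ (t : G) x, q (t • x) = q x := fun t x => Quotient.sound (MulAction.mem_orbit x t)
  have hqK : ∀ k x, (∃ t : G, t⁻¹ • x ∈ K k) → q x ∈ q '' K k :=
    fun k x ⟨t, ht⟩ => ⟨t⁻¹ • x, ht, hqsmul _ _⟩
  obtain ⟨T, w, hw⟩ := exists_zeroAtInfty_mul_eq_one (fun k => q '' K k)
    fun k => (hK k).image hq.continuous
  let pull : (Quotient (MulAction.orbitRel G X) →ᵇ ℝ) → X →ᵇ ℂ := fun f =>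
    Complex.ofRealCLM.compLeftContinuousBounded X (f.compContinuous ⟨q, hq.continuous⟩)
  have hpull : ∀ f x, pull f x = (f (q x) : ℂ) := fun _ _ => rfl
  refine ⟨pull T.toBCF, ⟨fun t x => by simp only [hpull, hqsmul], fun ε hε => ?_⟩,
    fun k => pull (w k), fun k => ⟨fun t x => by simp only [hpull, hqsmul], ?_, fun x hx => ?_⟩⟩
  · obtain ⟨L, hL, hTL⟩ := hasBasis_cocompact.tendsto_left_iff.1
      (ZeroAtInftyContinuousMapClass.zero_at_infty T) _ (Metric.ball_mem_nhds 0 hε)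
    obtain ⟨K', hK', hLK'⟩ := hq.isOpenMap.exists_isCompact_image_superset hq.surjective hL
    refine ⟨K', hK', fun x hx => ?_⟩
    have hxL : q x ∉ L := fun hxL => by
      obtain ⟨y, hy, hyx⟩ := hLK' hxL
      obtain ⟨t, rfl⟩ := MulAction.mem_orbit_iff.1 (Quotient.exact hyx.symm)
      exact hx t (by rwa [inv_smul_smul])
    simpa [hpull] using hTL hxL
  · refine (BoundedContinuousFunction.norm_le (by positivity)).2 fun x => ?_
    rw [hpull, Complex.norm_real]
    exact ((w k).norm_coe_le_norm _).trans (hw k).1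
  · rw [hpull, hpull, ← Complex.ofReal_mul]
    exact_mod_cast (hw k).2 _ (hqK k x hx)

end OrbitFunctions

theorem AlgEquiv.isometry_of_map_star {B : Type*} [CStarAlgebra B] (e : B ≃ₐ[ℂ] B)
    (he : ∀ b, e (star b) = star (e b)) : Isometry e :=
  StarAlgEquiv.isometry (StarAlgEquiv.ofAlgEquiv e he)

section FixedMultipliers

variable {G X A MA : Type*} [Group G] [TopologicalSpace X] [NonUnitalNonAssocSemiring A]
  [Module ℂ A] [Star A]

/-- The space `{m ∈ M(A)^G : C_0(X)·m ⊆ A}`. -/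
def fixedC0Multipliers [Semiring MA] [Algebra ℂ MA] [Star MA] (ι : A →⋆ₙₐ[ℂ] MA)
    (ᾱ : G →* (MA ≃ₐ[ℂ] MA)) (Φ : (X →ᵇ ℂ) →⋆ₐ[ℂ] MA) : Submodule ℂ MA where
  carrier := {m | (∀ t : G, ᾱ t m = m) ∧ ∀ f ∈ zeroAtInftySet X, Φ f * m ∈ Set.range ι}
  add_mem' := fun ⟨hm, hmf⟩ ⟨hn, hnf⟩ =>
    ⟨fun t => by rw [map_add, hm, hn], fun f hf => by
      obtain ⟨a, ha⟩ := hmf f hf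
      obtain ⟨b, hb⟩ := hnf f hf
      exact ⟨a + b, by rw [map_add, ha, hb, mul_add]⟩⟩
  zero_mem' := ⟨fun t => map_zero _, fun f _ => ⟨0, by rw [map_zero, mul_zero]⟩⟩
  smul_mem' := fun c m ⟨hm, hmf⟩ =>
    ⟨fun t => by rw [map_smul, hm], fun f hf => by
      obtain ⟨a, ha⟩ := hmf f hf
      exact ⟨c • a, by rw [map_smul, ha, mul_smul_comm]⟩⟩

variable [CStarAlgebra MA] {ι : A →⋆ₙₐ[ℂ] MA} {ᾱ : G →* (MA ≃ₐ[ℂ] MA)} {Φ : (X →ᵇ ℂ) →⋆ₐ[ℂ] MA}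

theorem isClosed_fixedC0Multipliers (hι : IsClosed (Set.range ι))
    (hᾱ : ∀ t, Continuous (ᾱ t)) : IsClosed (fixedC0Multipliers ι ᾱ Φ : Set MA) := by
  have : (fixedC0Multipliers ι ᾱ Φ : Set MA) = (⋂ t, {m | ᾱ t m = m}) ∩
      ⋂ f ∈ zeroAtInftySet X, (Φ f * ·) ⁻¹' Set.range ι := by
    ext m
    simp [fixedC0Multipliers]
  rw [this]
  exact (isClosed_iInter fun t => isClosed_eq (hᾱ t) continuous_id).inter
    (isClosed_biInter fun f _ => hι.preimage (continuous_const_mul _))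

theorem mul_mem_fixedC0Multipliers (hι : ∀ (m : MA) a, ι a * m ∈ Set.range ι) {m c : MA}
    (hm : m ∈ fixedC0Multipliers ι ᾱ Φ) (hc : ∀ t, ᾱ t c = c) :
    m * c ∈ fixedC0Multipliers ι ᾱ Φ :=
  ⟨fun t => by rw [map_mul, hm.1, hc], fun f hf => by
    obtain ⟨a, ha⟩ := hm.2 f hf
    rw [← mul_assoc, ← ha]
    exact hι c a⟩

theorem map_mul_mem_fixedC0Multipliers (hι : ∀ (m : MA) a, m * ι a ∈ Set.range ι)
    {h : X →ᵇ ℂ} (hh : ∀ t, ᾱ t (Φ h) = Φ h) {m : MA} (hm : m ∈ fixedC0Multipliers ι ᾱ Φ) :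
    Φ h * m ∈ fixedC0Multipliers ι ᾱ Φ :=
  ⟨fun t => by rw [map_mul, hm.1, hh], fun f hf => by
    obtain ⟨a, ha⟩ := hm.2 f hf
    rw [← mul_assoc, ← map_mul, mul_comm, map_mul, mul_assoc, ← ha]
    exact hι _ a⟩

theorem mem_fixedC0Multipliers_of_hasCompactSupport [T2Space X] [LocallyCompactSpace X]
    (hι : IsClosed (Set.range ι)) {m : MA} (hm : ∀ t, ᾱ t m = m)
    (hmf : ∀ f : X →ᵇ ℂ, HasCompactSupport f → Φ f * m ∈ Set.range ι) :
    m ∈ fixedC0Multipliers ι ᾱ Φ :=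
  ⟨hm, fun _ hf => closure_minimal hmf (hι.preimage ((continuous_mul_const m).comp
    (map_continuous Φ))) (zeroAtInftySet_subset_closure hf)⟩

theorem exists_eq_mul_of_mem_closure [MulAction G X] [TopologicalSpace G] [ProperSMul G X]
    [LocallyCompactSpace X] (hι : ∀ (m : MA) a, m * ι a ∈ Set.range ι)
    (hιc : IsClosed (Set.range ι)) (hᾱ : ∀ t, Continuous (ᾱ t))
    (hΦ : ∀ f : X →ᵇ ℂ, (∀ (t : G) x, f (t • x) = f x) → ∀ t, ᾱ t (Φ f) = Φ f) {m : MA}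
    (hm : m ∈ closure {y | ∃ p ∈ orbitCompactSet G X, ∃ n ∈ fixedC0Multipliers ι ᾱ Φ,
      y = Φ p * n}) :
    ∃ h ∈ orbitZeroAtInftySet G X, ∃ n ∈ fixedC0Multipliers ι ᾱ Φ, m = Φ h * n := by
  obtain ⟨a, haS, hsum, hbound⟩ := exists_hasSum_sub_of_mem_closure
    (by exact ⟨0, ⟨fun _ _ => rfl, ∅, isCompact_empty, fun _ _ => rfl⟩, 0, zero_mem _, by simp⟩)
    hm (r := 4⁻¹) (by norm_num) (by norm_num)
  choose p hp n hn hpn using haS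
  choose K hK hpK using fun k => (hp k).2
  obtain ⟨h, hh, g, hg⟩ := exists_orbitZeroAtInftySet_mul_eq_one (G := G)
    (fun k => K k ∪ K (k + 1)) fun k => (hK k).union (hK (k + 1))
  set b := fun k => a (k + 1) - a k
  have hmem : ∀ k, a k ∈ fixedC0Multipliers ι ᾱ Φ := fun k =>
    hpn k ▸ map_mul_mem_fixedC0Multipliers hι (hΦ _ (hp k).1) (hn k)
  have habsorb : ∀ k, Φ h * (Φ (g k) * b k) = b k := by
    intro k
    have hone : ∀ j, K j ⊆ K k ∪ K (k + 1) → h * g k * p j = p j := fun j hj =>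
      BoundedContinuousFunction.mul_eq_right_of_eq_one_on_orbits
        (fun x ⟨t, ht⟩ => (hg k).2.2 x ⟨t, hj ht⟩) (hpK j)
    simp only [b, hpn, mul_sub, ← mul_assoc, ← map_mul]
    rw [hone k Set.subset_union_left, hone (k + 1) Set.subset_union_right]
  have hsummable : Summable fun k => Φ (g k) * b k := by
    refine Summable.of_norm_bounded ((summable_geometric_of_lt_one (r := 2⁻¹) (by norm_num)
      (by norm_num)).mul_left (2 * (‖m‖ + 1))) fun k => ?_
    calc ‖Φ (g k) * b k‖ ≤ 2 ^ k * (2 * (‖m‖ + 1) * 4⁻¹ ^ k) :=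
          (norm_mul_le _ _).trans (mul_le_mul ((NonUnitalStarAlgHom.norm_apply_le Φ _).trans
            (hg k).2.1) (hbound k) (norm_nonneg _) (by positivity))
      _ = 2 * (‖m‖ + 1) * 2⁻¹ ^ k := by
          rw [mul_left_comm, ← mul_pow]; norm_num
  refine ⟨h, hh, ∑' k, Φ (g k) * b k, tsum_mem (isClosed_fixedC0Multipliers hιc hᾱ) fun k =>
    map_mul_mem_fixedC0Multipliers hι (hΦ _ (hg k).1) (sub_mem (hmem _) (hmem _)), ?_⟩
  rw [← hsummable.tsum_mul_left, tsum_congr habsorb, hsum.tsum_eq]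

end FixedMultipliers

theorem statement19_general {G X A MA : Type*} [Group G] [TopologicalSpace G]
    [TopologicalSpace X] [T2Space X] [LocallyCompactSpace X]
    [MulAction G X] [ProperSMul G X]
    [NonUnitalNormedRing A] [StarRing A] [NormedSpace ℂ A] [CompleteSpace A]
    [NormedRing MA] [StarRing MA] [CStarRing MA] [NormedAlgebra ℂ MA] [StarModule ℂ MA]
    [CompleteSpace MA]
    -- the embedding of `A` as an essential ideal in its multiplier algebra `MA`
    (ι : A →⋆ₙₐ[ℂ] MA) (hιiso : Isometry ι)
    (hιideal : ∀ (m : MA) (a : A), m * ι a ∈ Set.range ι ∧ ι a * m ∈ Set.range ι)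
    -- the `G`-action on `MA`, extending the action on `A`
    (ᾱ : G →* (MA ≃ₐ[ℂ] MA))
    (hᾱstar : ∀ (t : G) (m : MA), ᾱ t (star m) = star (ᾱ t m))
    -- the central structure map `Φ : C_b(X) → M(A)`
    (Φ : (X →ᵇ ℂ) →⋆ₐ[ℂ] MA)
    (hΦequiv : ∀ (t : G) (f g : X →ᵇ ℂ),
        (∀ x : X, g x = f (t⁻¹ • x)) → ᾱ t (Φ f) = Φ g) :
    -- `C_c(X)`, `C_c(G\X)`, `C_0(X)`, `C_0(G\X)`
    let Cc : Set (X →ᵇ ℂ) := {f | HasCompactSupport (⇑f)}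
    let C0 : Set (X →ᵇ ℂ) := {f | ∀ ε > (0:ℝ), ∃ K : Set X, IsCompact K ∧
        ∀ x ∉ K, ‖f x‖ < ε}
    let Ccorb : Set (X →ᵇ ℂ) := {h | (∀ (t : G) (x : X), h (t • x) = h x) ∧
        ∃ K : Set X, IsCompact K ∧ ∀ x : X, (∀ t : G, t⁻¹ • x ∉ K) → h x = 0}
    let C0orb : Set (X →ᵇ ℂ) := {h | (∀ (t : G) (x : X), h (t • x) = h x) ∧
        ∀ ε > (0:ℝ), ∃ K : Set X, IsCompact K ∧
          ∀ x : X, (∀ t : G, t⁻¹ • x ∉ K) → ‖h x‖ < ε}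
    -- `A_c = C_c(X)·A·C_c(X)`
    let Ac : Set A := {a | ∃ f ∈ Cc, ∃ g ∈ Cc, ∃ b : A, ι a = Φ f * ι b * Φ g}
    -- `{m ∈ M(A)^G : m·f, f·m ∈ A_c ∀ f ∈ C_c(X)}`
    let Tc : Set MA := {m | (∀ t : G, ᾱ t m = m) ∧ ∀ f ∈ Cc,
        (∃ a ∈ Ac, Φ f * m = ι a) ∧ (∃ a ∈ Ac, m * Φ f = ι a)}
    -- `A_c^G = C_c(G\X)·Tc·C_c(G\X)`
    let AcG : Set MA := {m | ∃ h₁ ∈ Ccorb, ∃ h₂ ∈ Ccorb, ∃ n ∈ Tc, m = Φ h₁ * n * Φ h₂}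
    -- `{m ∈ M(A)^G : C_0(X)·m ⊆ A}`
    let T0 : Set MA := {m | (∀ t : G, ᾱ t m = m) ∧ ∀ f ∈ C0, Φ f * m ∈ Set.range ι}
    -- Kasparov's fixed-point algebra `A^G = C_0(G\X)·T0`
    let AG : Set MA := {m | ∃ h ∈ C0orb, ∃ n ∈ T0, m = Φ h * n}
    AcG ⊆ AG ∧
    IsClosed T0 ∧
    (∀ m ∈ T0, ∀ n ∈ T0, m + n ∈ T0 ∧ m * n ∈ T0) ∧
    (∀ m ∈ T0, ∀ c : ℂ, c • m ∈ T0) ∧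
    closure AcG ⊆ AG := by
  intro Cc C0 Ccorb C0orb Ac Tc AcG T0 AG
  let : CStarAlgebra MA := {}
  have hιc : IsClosed (Set.range ι) := hιiso.isClosedEmbedding.isClosed_range
  have hιright : ∀ (m : MA) a, ι a * m ∈ Set.range ι := fun m a => (hιideal m a).2
  have hᾱc : ∀ t, Continuous (ᾱ t) := fun t =>
    (AlgEquiv.isometry_of_map_star _ (hᾱstar t)).continuous
  have hΦ : ∀ f : X →ᵇ ℂ, (∀ (t : G) x, f (t • x) = f x) → ∀ t, ᾱ t (Φ f) = Φ f :=
    fun f hf t => hΦequiv t f f fun x => (hf t⁻¹ x).symm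
  have hTc : Tc ⊆ T0 := fun n hn => mem_fixedC0Multipliers_of_hasCompactSupport hιc hn.1
    fun f hf => (hn.2 f hf).1.imp fun _ ha => ha.2.symm
  have hAcG : AcG ⊆ {y | ∃ p ∈ Ccorb, ∃ n ∈ T0, y = Φ p * n} := by
    rintro _ ⟨h₁, hh₁, h₂, hh₂, n, hn, rfl⟩
    exact ⟨h₁, hh₁, n * Φ h₂, mul_mem_fixedC0Multipliers hιright (hTc hn) (hΦ h₂ hh₂.1),
      mul_assoc _ _ _⟩
  refine ⟨fun y hy => ?_, isClosed_fixedC0Multipliers hιc hᾱc, fun m hm n hn =>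
    ⟨(fixedC0Multipliers ι ᾱ Φ).add_mem hm hn, mul_mem_fixedC0Multipliers hιright hm hn.1⟩,
    fun m hm c => (fixedC0Multipliers ι ᾱ Φ).smul_mem c hm, fun m hm =>
    exists_eq_mul_of_mem_closure (fun m a => (hιideal m a).1) hιc hᾱc hΦ (closure_mono hAcG hm)⟩
  obtain ⟨p, hp, n, hn, rfl⟩ := hAcG hy
  exact ⟨p, orbitCompactSet_subset_orbitZeroAtInftySet hp, n, hn, rfl⟩

/-- Let `A` be a proper `X⋊G`-algebra with *central* structure map
`Φ : C_b(X) → ZM(A)` (here `MA` is an abstract multiplier algebra of `A`, with embedding `ι`).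
Then the fixed-point algebra with compact supports
`A_c^G = C_c(G\X)·{m ∈ M(A)^G : m·f, f·m ∈ A_c ∀ f ∈ C_c(X)}·C_c(G\X)` is contained in
Kasparov's fixed-point algebra `A^G = C_0(G\X)·{m ∈ M(A)^G : C_0(X)·m ⊆ A}`, the set
`{m ∈ M(A)^G : C_0(X)·m ⊆ A}` is a norm-closed subalgebra of `M(A)`, and consequently the
closure of `A_c^G` in `M(A)` is contained in `A^G`. -/
theorem statement19 {G X A MA : Type*} [Group G] [TopologicalSpace G] [IsTopologicalGroup G]
    [TopologicalSpace X] [T2Space X] [LocallyCompactSpace X]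
    [MulAction G X] [ContinuousSMul G X] [ProperSMul G X]
    [NonUnitalNormedRing A] [StarRing A] [CStarRing A] [NormedSpace ℂ A]
    [IsScalarTower ℂ A A] [SMulCommClass ℂ A A] [StarModule ℂ A] [CompleteSpace A]
    [NormedRing MA] [StarRing MA] [CStarRing MA] [NormedAlgebra ℂ MA] [StarModule ℂ MA]
    [CompleteSpace MA]
    -- the embedding of `A` as an essential ideal in its multiplier algebra `MA`
    (ι : A →⋆ₙₐ[ℂ] MA) (hιinj : Function.Injective ι) (hιiso : Isometry ι)
    (hιideal : ∀ (m : MA) (a : A), m * ι a ∈ Set.range ι ∧ ι a * m ∈ Set.range ι)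
    -- the `G`-action on `MA`, extending the action on `A`
    (ᾱ : G →* (MA ≃ₐ[ℂ] MA))
    (hᾱstar : ∀ (t : G) (m : MA), ᾱ t (star m) = star (ᾱ t m))
    (hᾱA : ∀ (t : G) (a : A), ᾱ t (ι a) ∈ Set.range ι)
    -- the central structure map `Φ : C_b(X) → M(A)`
    (Φ : (X →ᵇ ℂ) →⋆ₐ[ℂ] MA)
    (hcentral : ∀ (f : X →ᵇ ℂ) (m : MA), Φ f * m = m * Φ f)
    (hΦequiv : ∀ (t : G) (f g : X →ᵇ ℂ),
        (∀ x : X, g x = f (t⁻¹ • x)) → ᾱ t (Φ f) = Φ g) :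
    -- `C_c(X)`, `C_c(G\X)`, `C_0(X)`, `C_0(G\X)`
    let Cc : Set (X →ᵇ ℂ) := {f | HasCompactSupport (⇑f)}
    let C0 : Set (X →ᵇ ℂ) := {f | ∀ ε > (0:ℝ), ∃ K : Set X, IsCompact K ∧
        ∀ x ∉ K, ‖f x‖ < ε}
    let Ccorb : Set (X →ᵇ ℂ) := {h | (∀ (t : G) (x : X), h (t • x) = h x) ∧
        ∃ K : Set X, IsCompact K ∧ ∀ x : X, (∀ t : G, t⁻¹ • x ∉ K) → h x = 0}
    let C0orb : Set (X →ᵇ ℂ) := {h | (∀ (t : G) (x : X), h (t • x) = h x) ∧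
        ∀ ε > (0:ℝ), ∃ K : Set X, IsCompact K ∧
          ∀ x : X, (∀ t : G, t⁻¹ • x ∉ K) → ‖h x‖ < ε}
    -- `A_c = C_c(X)·A·C_c(X)`
    let Ac : Set A := {a | ∃ f ∈ Cc, ∃ g ∈ Cc, ∃ b : A, ι a = Φ f * ι b * Φ g}
    -- `{m ∈ M(A)^G : m·f, f·m ∈ A_c ∀ f ∈ C_c(X)}`
    let Tc : Set MA := {m | (∀ t : G, ᾱ t m = m) ∧ ∀ f ∈ Cc,
        (∃ a ∈ Ac, Φ f * m = ι a) ∧ (∃ a ∈ Ac, m * Φ f = ι a)}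
    -- `A_c^G = C_c(G\X)·Tc·C_c(G\X)`
    let AcG : Set MA := {m | ∃ h₁ ∈ Ccorb, ∃ h₂ ∈ Ccorb, ∃ n ∈ Tc, m = Φ h₁ * n * Φ h₂}
    -- `{m ∈ M(A)^G : C_0(X)·m ⊆ A}`
    let T0 : Set MA := {m | (∀ t : G, ᾱ t m = m) ∧ ∀ f ∈ C0, Φ f * m ∈ Set.range ι}
    -- Kasparov's fixed-point algebra `A^G = C_0(G\X)·T0`
    let AG : Set MA := {m | ∃ h ∈ C0orb, ∃ n ∈ T0, m = Φ h * n}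
    AcG ⊆ AG ∧
    IsClosed T0 ∧
    (∀ m ∈ T0, ∀ n ∈ T0, m + n ∈ T0 ∧ m * n ∈ T0) ∧
    (∀ m ∈ T0, ∀ c : ℂ, c • m ∈ T0) ∧
    closure AcG ⊆ AG :=
  statement19_general ι hιiso hιideal ᾱ hᾱstar Φ hΦequiv
end
end
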